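/- (Sufficient condition, second-order branch.) Let f : ℝ → ℝ be infinitely differentiable, x ∈ ℝ, and d₀ = 1/10, d₁ = 6/10, d₂ = 3/10. Suppose ω₀⁺, ω₁⁺, ω₂⁺, ω₀⁻, ω₁⁻, ω₂⁻ : (0,δ) → ℝ satisfy ω₀^±(h) + ω₁^±(h) + ω₂^±(h) = 1 for all h, ωₖ^±(h) − dₖ = O(h²) and ωₖ⁺(h) − ωₖ⁻(h) = O(h³) as h → 0⁺ for each k. Then (1/h)·(Σₖ ωₖ⁺(h)·f̂ᵏ(x,h) − Σₖ ωₖ⁻(h)·f̂ᵏ(x−h,h)) − f′(x) = O(h⁵) as h → 0⁺; i.e., the resulting WENO scheme attains the optimal fifth order of accuracy. -/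

import Mathlib

open Filter Asymptotics Topology

/-- The three candidate flux values at the right interface of the cell centered
at `y` with mesh size `h`. -/
noncomputable def candidateFlux (f : ℝ → ℝ) (y h : ℝ) : Fin 3 → ℝ :=
  ![(2 * f (y - 2*h) - 7 * f (y - h) + 11 * f y) / 6,
    (-f (y - h) + 5 * f y + 2 * f (y + h)) / 6,
    (2 * f y + 5 * f (y + h) - f (y + 2*h)) / 6]

/-- The linear (ideal) weights `d₀ = 1/10`, `d₁ = 6/10`, `d₂ = 3/10`. -/
noncomputable def dlin : Fin 3 → ℝ := ![1/10, 6/10, 3/10]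

section Helpers
open Set


lemma idw_eq {g : ℝ → ℝ} (hg : ContDiff ℝ (⊤ : ℕ∞) g) {s : Set ℝ} (hs : UniqueDiffOn ℝ s)
    {y : ℝ} (hy : y ∈ s) (i : ℕ) : iteratedDerivWithin i g s y = iteratedDeriv i g y := by
  have hg' : ContDiff ℝ ((⊤:ℕ∞) : WithTop ℕ∞) g := hg.of_le (by simp)
  have h1 : HasFTaylorSeriesUpTo (⊤:ℕ∞) g (ftaylorSeries ℝ g) := contDiff_iff_ftaylorSeries.mp hg'
  have h2 := (h1.hasFTaylorSeriesUpToOn s).eq_iteratedFDerivWithin_of_uniqueDiffOn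
    (m := i) (by exact_mod_cast le_top) hs hy
  have h3 := h1.eq_iteratedFDeriv (m := i) (by exact_mod_cast le_top) y
  rw [iteratedDerivWithin_eq_iteratedFDerivWithin, iteratedDeriv_eq_iteratedFDeriv, ← h2, ← h3]

lemma taylor_bigO_aux (g : ℝ → ℝ) (hg : ContDiff ℝ (⊤ : ℕ∞) g) (n : ℕ) :
    (fun h : ℝ => g h - ∑ i ∈ Finset.range (n+1), iteratedDeriv i g 0 * h^i / (Nat.factorial i))
      =O[𝓝[>] (0:ℝ)] fun h => h^(n+1) := by
  obtain ⟨M, hM⟩ : ∃ M, ∀ y ∈ Set.Icc (0:ℝ) 1, |iteratedDeriv (n+1) g y| ≤ M := by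
    obtain ⟨M, hM⟩ := (isCompact_Icc (a := (0:ℝ)) (b := 1)).exists_bound_of_continuousOn
      ((hg.continuous_iteratedDeriv (n+1) (by exact_mod_cast le_top)).continuousOn)
    exact ⟨M, fun y hy => by simpa using hM y hy⟩
  refine IsBigO.of_bound (M / (Nat.factorial (n+1))) ?_
  filter_upwards [Ioo_mem_nhdsGT_of_mem (Set.mem_Ico.mpr ⟨le_rfl, one_pos⟩)] with h hh
  have h0 : (0:ℝ) < h := hh.1
  have hudo : UniqueDiffOn ℝ (Set.Icc 0 h) := uniqueDiffOn_Icc h0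
  have hI : Set.uIcc 0 h = Set.Icc 0 h := Set.uIcc_of_le h0.le
  have hIo : Set.uIoo 0 h = Set.Ioo 0 h := Set.uIoo_of_le h0.le
  obtain ⟨x', hx', heq⟩ := taylor_mean_remainder_lagrange (n := n) h0.ne
    ((hg.of_le (by exact_mod_cast le_top)).contDiffOn)
    (by
      rw [hI, hIo]
      refine (DifferentiableOn.congr (f := iteratedDeriv n g) ?_ ?_)
      · exact ((hg.differentiable_iteratedDeriv n (by exact_mod_cast lt_top_iff_ne_top.mpr (by simp))).differentiableOn)
      · intro y hy
        exact idw_eq hg hudo (Set.mem_Icc.mpr ⟨hy.1.le, hy.2.le⟩) n)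
  rw [hI] at heq
  rw [hIo] at hx'
  have htay : taylorWithinEval g n (Set.Icc 0 h) 0 h
      = ∑ i ∈ Finset.range (n+1), iteratedDeriv i g 0 * h^i / (Nat.factorial i) := by
    rw [taylor_within_apply]
    refine Finset.sum_congr rfl fun i _ => ?_
    rw [idw_eq hg hudo (Set.mem_Icc.mpr ⟨le_rfl, h0.le⟩) i]
    simp [smul_eq_mul]
    ring
  rw [← htay, heq, idw_eq hg hudo (Set.mem_Icc.mpr ⟨hx'.1.le, hx'.2.le⟩) (n+1)]
  have hxM : |iteratedDeriv (n+1) g x'| ≤ M :=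
    hM x' ⟨hx'.1.le, hx'.2.le.trans hh.2.le⟩
  have hfac : (0:ℝ) < (Nat.factorial (n+1) : ℝ) := by positivity
  have habs : |iteratedDeriv (n+1) g x' * (h - 0)^(n+1) / (Nat.factorial (n+1) : ℝ)|
      = |iteratedDeriv (n+1) g x'| * h^(n+1) / (Nat.factorial (n+1) : ℝ) := by
    rw [abs_div, abs_mul, abs_of_pos hfac, sub_zero, abs_of_pos (pow_pos h0 _)]
  simp only [Real.norm_eq_abs]
  rw [habs, abs_of_pos (pow_pos h0 (n+1)),
    show M / (Nat.factorial (n+1) : ℝ) * h^(n+1) = M * h^(n+1) / (Nat.factorial (n+1) : ℝ) by ring,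
    div_le_div_iff_of_pos_right hfac]
  exact mul_le_mul_of_nonneg_right hxM (pow_nonneg h0.le (n+1))

noncomputable def tpoly (f : ℝ → ℝ) (x : ℝ) (n : ℕ) (t h : ℝ) : ℝ :=
  ∑ i ∈ Finset.range (n+1), iteratedDeriv i f x * t^i * h^i / (Nat.factorial i)

lemma taylor_flex {f : ℝ → ℝ} (hf : ContDiff ℝ (⊤ : ℕ∞) f) (x t : ℝ) (n : ℕ)
    (u : ℝ → ℝ) (hu : ∀ h, u h = x + t * h) :
    (fun h : ℝ => f (u h) - tpoly f x n t h) =O[𝓝[>] (0:ℝ)] fun h => h^(n+1) := by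
  have hg : ContDiff ℝ (⊤ : ℕ∞) (fun h : ℝ => f (x + t * h)) := by
    exact
    hf.comp (contDiff_const.add (contDiff_const.mul contDiff_id))
  have hder : ∀ i : ℕ, iteratedDeriv i (fun h : ℝ => f (x + t * h)) 0
      = t ^ i * iteratedDeriv i f x := by
    intro i
    have h1 : iteratedDeriv i (fun h : ℝ => (fun z => f (x + z)) (t * h))
        = fun h => t ^ i * iteratedDeriv i (fun z => f (x + z)) (t * h) :=
      iteratedDeriv_comp_const_mul ((hf.comp (contDiff_const.add contDiff_id)).of_le (by exact_mod_cast le_top)) t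
    have h2 := iteratedDeriv_comp_const_add i f x
    calc iteratedDeriv i (fun h : ℝ => f (x + t * h)) 0
        = t ^ i * iteratedDeriv i (fun z => f (x + z)) (t * 0) := congrFun h1 0
      _ = t ^ i * iteratedDeriv i f x := by rw [h2]; norm_num
  have h0 := taylor_bigO_aux _ hg n
  refine h0.congr_left fun h => ?_
  rw [hu, tpoly]
  congr 1
  refine Finset.sum_congr rfl fun i _ => ?_
  rw [hder i]; ring

lemma E1_bigO {f : ℝ → ℝ} (hf : ContDiff ℝ (⊤ : ℕ∞) f) (x : ℝ) :
    (fun h : ℝ => (∑ k : Fin 3, dlin k * candidateFlux f x h k) - (∑ k : Fin 3, dlin k * candidateFlux f (x - h) h k) - h * deriv f x)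
      =O[𝓝[>] (0:ℝ)] fun h => h^6 := by
  have r0 := taylor_flex hf x (-2) 5 (fun h => x - 2*h) (fun h => by ring)
  have r1 := taylor_flex hf x (-1) 5 (fun h => x - h) (fun h => by ring)
  have r2 := taylor_flex hf x (0) 5 (fun h => x) (fun h => by ring)
  have r3 := taylor_flex hf x (1) 5 (fun h => x + h) (fun h => by ring)
  have r4 := taylor_flex hf x (2) 5 (fun h => x + 2*h) (fun h => by ring)
  have r5 := taylor_flex hf x (-3) 5 (fun h => x - h - 2*h) (fun h => by ring)
  have r6 := taylor_flex hf x (-2) 5 (fun h => x - h - h) (fun h => by ring)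
  have r7 := taylor_flex hf x (0) 5 (fun h => x - h + h) (fun h => by ring)
  have r8 := taylor_flex hf x (1) 5 (fun h => x - h + 2*h) (fun h => by ring)
  have hid : (fun h : ℝ => (∑ k : Fin 3, dlin k * candidateFlux f x h k) - (∑ k : Fin 3, dlin k * candidateFlux f (x - h) h k) - h * deriv f x)
      = (fun h : ℝ => (1/30) * (f (x - 2*h) - tpoly f x 5 (-2) h) + (-1) * (f (x - h) - tpoly f x 5 (-1) h) + (47/60) * (f (x) - tpoly f x 5 (0) h) + (9/20) * (f (x + h) - tpoly f x 5 (1) h) + (-1/20) * (f (x + 2*h) - tpoly f x 5 (2) h) + (-1/30) * (f (x - h - 2*h) - tpoly f x 5 (-3) h) + (13/60) * (f (x - h - h) - tpoly f x 5 (-2) h) + (-9/20) * (f (x - h + h) - tpoly f x 5 (0) h) + (1/20) * (f (x - h + 2*h) - tpoly f x 5 (1) h)) := by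
    funext h
    rw [show deriv f x = iteratedDeriv 1 f x by rw [iteratedDeriv_one]]
    simp only [Fin.sum_univ_three, candidateFlux, dlin, Matrix.cons_val_zero, Matrix.cons_val_one,
      Matrix.head_cons, Matrix.cons_val_two, Matrix.tail_cons, tpoly, Finset.sum_range_succ,
      Finset.sum_range_zero, Nat.factorial]
    push_cast
    ring
  rw [hid]
  exact ((((((((r0.const_mul_left (1/30)).add (r1.const_mul_left (-1))).add (r2.const_mul_left (47/60))).add (r3.const_mul_left (9/20))).add (r4.const_mul_left (-1/20))).add (r5.const_mul_left (-1/30))).add (r6.const_mul_left (13/60))).add (r7.const_mul_left (-9/20))).add (r8.const_mul_left (1/20))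

lemma E2_bigO_0 {f : ℝ → ℝ} (hf : ContDiff ℝ (⊤ : ℕ∞) f) (x : ℝ) :
    (fun h : ℝ => candidateFlux f x h 0 - candidateFlux f (x - h) h 0 - h * deriv f x)
      =O[𝓝[>] (0:ℝ)] fun h => h^4 := by
  have r0 := taylor_flex hf x (-2) 3 (fun h => x - 2*h) (fun h => by ring)
  have r1 := taylor_flex hf x (-1) 3 (fun h => x - h) (fun h => by ring)
  have r2 := taylor_flex hf x (0) 3 (fun h => x) (fun h => by ring)
  have r3 := taylor_flex hf x (-3) 3 (fun h => x - h - 2*h) (fun h => by ring)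
  have r4 := taylor_flex hf x (-2) 3 (fun h => x - h - h) (fun h => by ring)
  have hid : (fun h : ℝ => candidateFlux f x h 0 - candidateFlux f (x - h) h 0 - h * deriv f x)
      = (fun h : ℝ => (1/3) * (f (x - 2*h) - tpoly f x 3 (-2) h) + (-3) * (f (x - h) - tpoly f x 3 (-1) h) + (11/6) * (f (x) - tpoly f x 3 (0) h) + (-1/3) * (f (x - h - 2*h) - tpoly f x 3 (-3) h) + (7/6) * (f (x - h - h) - tpoly f x 3 (-2) h)) := by
    funext h
    rw [show deriv f x = iteratedDeriv 1 f x by rw [iteratedDeriv_one]]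
    simp only [Fin.sum_univ_three, candidateFlux, dlin, Matrix.cons_val_zero, Matrix.cons_val_one,
      Matrix.head_cons, Matrix.cons_val_two, Matrix.tail_cons, tpoly, Finset.sum_range_succ,
      Finset.sum_range_zero, Nat.factorial]
    push_cast
    ring
  rw [hid]
  exact ((((r0.const_mul_left (1/3)).add (r1.const_mul_left (-3))).add (r2.const_mul_left (11/6))).add (r3.const_mul_left (-1/3))).add (r4.const_mul_left (7/6))

lemma E2_bigO_1 {f : ℝ → ℝ} (hf : ContDiff ℝ (⊤ : ℕ∞) f) (x : ℝ) :
    (fun h : ℝ => candidateFlux f x h 1 - candidateFlux f (x - h) h 1 - h * deriv f x)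
      =O[𝓝[>] (0:ℝ)] fun h => h^4 := by
  have r0 := taylor_flex hf x (-1) 3 (fun h => x - h) (fun h => by ring)
  have r1 := taylor_flex hf x (0) 3 (fun h => x) (fun h => by ring)
  have r2 := taylor_flex hf x (1) 3 (fun h => x + h) (fun h => by ring)
  have r3 := taylor_flex hf x (-2) 3 (fun h => x - h - h) (fun h => by ring)
  have r4 := taylor_flex hf x (0) 3 (fun h => x - h + h) (fun h => by ring)
  have hid : (fun h : ℝ => candidateFlux f x h 1 - candidateFlux f (x - h) h 1 - h * deriv f x)
      = (fun h : ℝ => (-1) * (f (x - h) - tpoly f x 3 (-1) h) + (5/6) * (f (x) - tpoly f x 3 (0) h) + (1/3) * (f (x + h) - tpoly f x 3 (1) h) + (1/6) * (f (x - h - h) - tpoly f x 3 (-2) h) + (-1/3) * (f (x - h + h) - tpoly f x 3 (0) h)) := by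
    funext h
    rw [show deriv f x = iteratedDeriv 1 f x by rw [iteratedDeriv_one]]
    simp only [Fin.sum_univ_three, candidateFlux, dlin, Matrix.cons_val_zero, Matrix.cons_val_one,
      Matrix.head_cons, Matrix.cons_val_two, Matrix.tail_cons, tpoly, Finset.sum_range_succ,
      Finset.sum_range_zero, Nat.factorial]
    push_cast
    ring
  rw [hid]
  exact ((((r0.const_mul_left (-1)).add (r1.const_mul_left (5/6))).add (r2.const_mul_left (1/3))).add (r3.const_mul_left (1/6))).add (r4.const_mul_left (-1/3))

lemma E2_bigO_2 {f : ℝ → ℝ} (hf : ContDiff ℝ (⊤ : ℕ∞) f) (x : ℝ) :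
    (fun h : ℝ => candidateFlux f x h 2 - candidateFlux f (x - h) h 2 - h * deriv f x)
      =O[𝓝[>] (0:ℝ)] fun h => h^4 := by
  have r0 := taylor_flex hf x (-1) 3 (fun h => x - h) (fun h => by ring)
  have r1 := taylor_flex hf x (0) 3 (fun h => x) (fun h => by ring)
  have r2 := taylor_flex hf x (1) 3 (fun h => x + h) (fun h => by ring)
  have r3 := taylor_flex hf x (2) 3 (fun h => x + 2*h) (fun h => by ring)
  have r4 := taylor_flex hf x (0) 3 (fun h => x - h + h) (fun h => by ring)
  have r5 := taylor_flex hf x (1) 3 (fun h => x - h + 2*h) (fun h => by ring)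
  have hid : (fun h : ℝ => candidateFlux f x h 2 - candidateFlux f (x - h) h 2 - h * deriv f x)
      = (fun h : ℝ => (-1/3) * (f (x - h) - tpoly f x 3 (-1) h) + (1/3) * (f (x) - tpoly f x 3 (0) h) + (5/6) * (f (x + h) - tpoly f x 3 (1) h) + (-1/6) * (f (x + 2*h) - tpoly f x 3 (2) h) + (-5/6) * (f (x - h + h) - tpoly f x 3 (0) h) + (1/6) * (f (x - h + 2*h) - tpoly f x 3 (1) h)) := by
    funext h
    rw [show deriv f x = iteratedDeriv 1 f x by rw [iteratedDeriv_one]]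
    simp only [Fin.sum_univ_three, candidateFlux, dlin, Matrix.cons_val_zero, Matrix.cons_val_one,
      Matrix.head_cons, Matrix.cons_val_two, Matrix.tail_cons, tpoly, Finset.sum_range_succ,
      Finset.sum_range_zero, Nat.factorial]
    push_cast
    ring
  rw [hid]
  exact (((((r0.const_mul_left (-1/3)).add (r1.const_mul_left (1/3))).add (r2.const_mul_left (5/6))).add (r3.const_mul_left (-1/6))).add (r4.const_mul_left (-5/6))).add (r5.const_mul_left (1/6))

lemma E3_bigO_0 {f : ℝ → ℝ} (hf : ContDiff ℝ (⊤ : ℕ∞) f) (x : ℝ) :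
    (fun h : ℝ => candidateFlux f (x - h) h 0 - (∑ l : Fin 3, dlin l * candidateFlux f (x - h) h l))
      =O[𝓝[>] (0:ℝ)] fun h => h^3 := by
  have r0 := taylor_flex hf x (-1) 2 (fun h => x - h) (fun h => by ring)
  have r1 := taylor_flex hf x (-3) 2 (fun h => x - h - 2*h) (fun h => by ring)
  have r2 := taylor_flex hf x (-2) 2 (fun h => x - h - h) (fun h => by ring)
  have r3 := taylor_flex hf x (0) 2 (fun h => x - h + h) (fun h => by ring)
  have r4 := taylor_flex hf x (1) 2 (fun h => x - h + 2*h) (fun h => by ring)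
  have hid : (fun h : ℝ => candidateFlux f (x - h) h 0 - (∑ l : Fin 3, dlin l * candidateFlux f (x - h) h l))
      = (fun h : ℝ => (21/20) * (f (x - h) - tpoly f x 2 (-1) h) + (3/10) * (f (x - h - 2*h) - tpoly f x 2 (-3) h) + (-19/20) * (f (x - h - h) - tpoly f x 2 (-2) h) + (-9/20) * (f (x - h + h) - tpoly f x 2 (0) h) + (1/20) * (f (x - h + 2*h) - tpoly f x 2 (1) h)) := by
    funext h
    skip; -- rw [show deriv f x = iteratedDeriv 1 f x by rw [iteratedDeriv_one]]
    simp only [Fin.sum_univ_three, candidateFlux, dlin, Matrix.cons_val_zero, Matrix.cons_val_one,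
      Matrix.head_cons, Matrix.cons_val_two, Matrix.tail_cons, tpoly, Finset.sum_range_succ,
      Finset.sum_range_zero, Nat.factorial]
    push_cast
    ring
  rw [hid]
  exact ((((r0.const_mul_left (21/20)).add (r1.const_mul_left (3/10))).add (r2.const_mul_left (-19/20))).add (r3.const_mul_left (-9/20))).add (r4.const_mul_left (1/20))

lemma E3_bigO_1 {f : ℝ → ℝ} (hf : ContDiff ℝ (⊤ : ℕ∞) f) (x : ℝ) :
    (fun h : ℝ => candidateFlux f (x - h) h 1 - (∑ l : Fin 3, dlin l * candidateFlux f (x - h) h l))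
      =O[𝓝[>] (0:ℝ)] fun h => h^3 := by
  have r0 := taylor_flex hf x (-1) 2 (fun h => x - h) (fun h => by ring)
  have r1 := taylor_flex hf x (-3) 2 (fun h => x - h - 2*h) (fun h => by ring)
  have r2 := taylor_flex hf x (-2) 2 (fun h => x - h - h) (fun h => by ring)
  have r3 := taylor_flex hf x (0) 2 (fun h => x - h + h) (fun h => by ring)
  have r4 := taylor_flex hf x (1) 2 (fun h => x - h + 2*h) (fun h => by ring)
  have hid : (fun h : ℝ => candidateFlux f (x - h) h 1 - (∑ l : Fin 3, dlin l * candidateFlux f (x - h) h l))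
      = (fun h : ℝ => (1/20) * (f (x - h) - tpoly f x 2 (-1) h) + (-1/30) * (f (x - h - 2*h) - tpoly f x 2 (-3) h) + (1/20) * (f (x - h - h) - tpoly f x 2 (-2) h) + (-7/60) * (f (x - h + h) - tpoly f x 2 (0) h) + (1/20) * (f (x - h + 2*h) - tpoly f x 2 (1) h)) := by
    funext h
    skip; -- rw [show deriv f x = iteratedDeriv 1 f x by rw [iteratedDeriv_one]]
    simp only [Fin.sum_univ_three, candidateFlux, dlin, Matrix.cons_val_zero, Matrix.cons_val_one,
      Matrix.head_cons, Matrix.cons_val_two, Matrix.tail_cons, tpoly, Finset.sum_range_succ,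
      Finset.sum_range_zero, Nat.factorial]
    push_cast
    ring
  rw [hid]
  exact ((((r0.const_mul_left (1/20)).add (r1.const_mul_left (-1/30))).add (r2.const_mul_left (1/20))).add (r3.const_mul_left (-7/60))).add (r4.const_mul_left (1/20))

lemma E3_bigO_2 {f : ℝ → ℝ} (hf : ContDiff ℝ (⊤ : ℕ∞) f) (x : ℝ) :
    (fun h : ℝ => candidateFlux f (x - h) h 2 - (∑ l : Fin 3, dlin l * candidateFlux f (x - h) h l))
      =O[𝓝[>] (0:ℝ)] fun h => h^3 := by
  have r0 := taylor_flex hf x (-1) 2 (fun h => x - h) (fun h => by ring)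
  have r1 := taylor_flex hf x (-3) 2 (fun h => x - h - 2*h) (fun h => by ring)
  have r2 := taylor_flex hf x (-2) 2 (fun h => x - h - h) (fun h => by ring)
  have r3 := taylor_flex hf x (0) 2 (fun h => x - h + h) (fun h => by ring)
  have r4 := taylor_flex hf x (1) 2 (fun h => x - h + 2*h) (fun h => by ring)
  have hid : (fun h : ℝ => candidateFlux f (x - h) h 2 - (∑ l : Fin 3, dlin l * candidateFlux f (x - h) h l))
      = (fun h : ℝ => (-9/20) * (f (x - h) - tpoly f x 2 (-1) h) + (-1/30) * (f (x - h - 2*h) - tpoly f x 2 (-3) h) + (13/60) * (f (x - h - h) - tpoly f x 2 (-2) h) + (23/60) * (f (x - h + h) - tpoly f x 2 (0) h) + (-7/60) * (f (x - h + 2*h) - tpoly f x 2 (1) h)) := by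
    funext h
    skip; -- rw [show deriv f x = iteratedDeriv 1 f x by rw [iteratedDeriv_one]]
    simp only [Fin.sum_univ_three, candidateFlux, dlin, Matrix.cons_val_zero, Matrix.cons_val_one,
      Matrix.head_cons, Matrix.cons_val_two, Matrix.tail_cons, tpoly, Finset.sum_range_succ,
      Finset.sum_range_zero, Nat.factorial]
    push_cast
    ring
  rw [hid]
  exact ((((r0.const_mul_left (-9/20)).add (r1.const_mul_left (-1/30))).add (r2.const_mul_left (13/60))).add (r3.const_mul_left (23/60))).add (r4.const_mul_left (-7/60))


end Helpers

/-- Sufficient condition, second-order branch: if the nonlinear weights sum to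
one, satisfy `ωₖ^± − dₖ = O(h²)` and `ωₖ⁺ − ωₖ⁻ = O(h³)`, then the WENO scheme
attains the optimal fifth order of accuracy. -/
theorem weno_sufficient_condition_second_order (f : ℝ → ℝ) (hf : ContDiff ℝ (⊤ : ℕ∞) f)
    (x : ℝ) (δ : ℝ) (hδ : 0 < δ) (ωp ωm : Fin 3 → ℝ → ℝ)
    (hsum : ∀ h ∈ Set.Ioo (0:ℝ) δ, (∑ k : Fin 3, ωp k h) = 1 ∧ (∑ k : Fin 3, ωm k h) = 1)
    (hO : ∀ k : Fin 3,
        ((fun h : ℝ => ωp k h - dlin k) =O[𝓝[>] (0:ℝ)] fun h => h ^ 2)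
      ∧ ((fun h : ℝ => ωm k h - dlin k) =O[𝓝[>] (0:ℝ)] fun h => h ^ 2))
    (hdiff : ∀ k : Fin 3,
        (fun h : ℝ => ωp k h - ωm k h) =O[𝓝[>] (0:ℝ)] fun h => h ^ 3) :
    (fun h : ℝ =>
        (1/h) * ((∑ k : Fin 3, ωp k h * candidateFlux f x h k)
          - (∑ k : Fin 3, ωm k h * candidateFlux f (x - h) h k)) - deriv f x)
      =O[𝓝[>] (0:ℝ)] fun h => h ^ 5 := by
  have pow24 : (fun h : ℝ => h^2 * h^4) = fun h => h^6 := by funext h; ring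
  have pow33 : (fun h : ℝ => h^3 * h^3) = fun h => h^6 := by funext h; ring
  have hbig : (fun h : ℝ =>
      (((∑ k : Fin 3, dlin k * candidateFlux f x h k)
          - (∑ k : Fin 3, dlin k * candidateFlux f (x - h) h k) - h * deriv f x)
        + ((ωp 0 h - dlin 0) * (candidateFlux f x h 0 - candidateFlux f (x - h) h 0 - h * deriv f x)
          + (ωp 1 h - dlin 1) * (candidateFlux f x h 1 - candidateFlux f (x - h) h 1 - h * deriv f x)
          + (ωp 2 h - dlin 2) * (candidateFlux f x h 2 - candidateFlux f (x - h) h 2 - h * deriv f x))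
        + ((ωp 0 h - ωm 0 h) * (candidateFlux f (x - h) h 0 - (∑ l : Fin 3, dlin l * candidateFlux f (x - h) h l))
          + (ωp 1 h - ωm 1 h) * (candidateFlux f (x - h) h 1 - (∑ l : Fin 3, dlin l * candidateFlux f (x - h) h l))
          + (ωp 2 h - ωm 2 h) * (candidateFlux f (x - h) h 2 - (∑ l : Fin 3, dlin l * candidateFlux f (x - h) h l)))))
      =O[𝓝[>] (0:ℝ)] fun h => h^6 := by
    refine ((E1_bigO hf x).add ?_).add ?_
    · exact ((pow24 ▸ ((hO 0).1.mul (E2_bigO_0 hf x))).add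
        (pow24 ▸ ((hO 1).1.mul (E2_bigO_1 hf x)))).add
        (pow24 ▸ ((hO 2).1.mul (E2_bigO_2 hf x)))
    · exact ((pow33 ▸ ((hdiff 0).mul (E3_bigO_0 hf x))).add
        (pow33 ▸ ((hdiff 1).mul (E3_bigO_1 hf x)))).add
        (pow33 ▸ ((hdiff 2).mul (E3_bigO_2 hf x)))
  have heq : (fun h : ℝ => 1/h * h^6) =ᶠ[𝓝[>] (0:ℝ)] fun h => h^5 := by
    filter_upwards [self_mem_nhdsWithin] with h hh
    have hne : h ≠ 0 := ne_of_gt hh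
    field_simp
  have comp := ((isBigO_refl (fun h : ℝ => 1/h) (𝓝[>] (0:ℝ))).mul hbig).trans heq.isBigO
  refine Filter.EventuallyEq.trans_isBigO ?_ comp
  filter_upwards [Ioo_mem_nhdsGT_of_mem (Set.mem_Ico.mpr ⟨le_rfl, hδ⟩), self_mem_nhdsWithin]
    with h hm hpos
  obtain ⟨hp1, hm1⟩ := hsum h hm
  have hne : h ≠ 0 := ne_of_gt hpos
  simp only [Fin.sum_univ_three] at hp1 hm1 ⊢
  have e2 : ωp 2 h = 1 - ωp 0 h - ωp 1 h := by linarith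
  have e2' : ωm 2 h = 1 - ωm 0 h - ωm 1 h := by linarith
  rw [e2, e2']
  simp only [dlin, Matrix.cons_val_zero, Matrix.cons_val_one, Matrix.head_cons,
    Matrix.cons_val_two, Matrix.tail_cons]
  field_simp
  ring
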